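/- Let K be a commutative ring, let A be a (not necessarily unital) associative K-algebra, and let B be a two-sided ideal of A such that the quotient A/B is a finitely presented K-module. If B is finitely presented as a K-algebra, then A is finitely presented as a K-algebra. -/

import Mathlib

/-- The free non-unital associative `K`-algebra on `X`: the semigroup algebra of the free
semigroup `X⁺` over `K`. -/
abbrev FreeNUAlg (K X : Type*) [CommRing K] : Type _ := MonoidAlgebra K (FreeSemigroup X)

/-- The two-sided ideal (as a `K`-submodule closed under left and right multiplication)
generated by a set in a non-unital `K`-algebra. -/
def idealSpan (K : Type*) {A : Type*} [CommRing K] [NonUnitalRing A] [Module K A]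
    (s : Set A) : Submodule K A :=
  sInf {J : Submodule K A | s ⊆ J ∧ ∀ a b : A, b ∈ J → a * b ∈ J ∧ b * a ∈ J}

/-- A non-unital `K`-algebra is finitely generated if some finite subset generates it as a
`K`-algebra. -/
def NUAlgFG (K A : Type*) [CommRing K] [NonUnitalRing A] [Module K A]
    [IsScalarTower K A A] [SMulCommClass K A A] : Prop :=
  ∃ s : Finset A, NonUnitalAlgebra.adjoin K (s : Set A) = ⊤

/-- A non-unital `K`-algebra is finitely presented if it is isomorphic to the quotient of a
free algebra `K⟨X⟩` on a finite set `X` by a finitely generated two-sided ideal, i.e. there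
is a surjection from some `K⟨X⟩`, `X` finite, whose kernel is a finitely generated
two-sided ideal. -/
def NUAlgFP (K A : Type*) [CommRing K] [NonUnitalRing A] [Module K A]
    [IsScalarTower K A A] [SMulCommClass K A A] : Prop :=
  ∃ (n : ℕ) (f : FreeNUAlg K (Fin n) →ₙₐ[K] A),
    Function.Surjective f ∧
      ∃ s : Finset (FreeNUAlg K (Fin n)),
        ∀ x, f x = 0 ↔ x ∈ idealSpan K (s : Set (FreeNUAlg K (Fin n)))

/-!
Present `A` on the generators `y` of `B` together with lifts `a z` of finitely many generators
of the module `A ⧸ B`. Every `x : A` is `∑ lᶻ a z` plus an element of `B`, which gives a section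
`σ` of the presentation `φ` with values in the normal forms `ι (K⟨Y⟩) + span {z}`. Impose the
relations of `B`, the rewriting rules `g = σ (φ g)` for every product `g` of two generators,
and the same rules for the finitely many `K`-linear relations among the `a z`. As `A B ⊆ B`,
a generator times an element of `ι (K⟨Y⟩)` rewrites back into `ι (K⟨Y⟩)`, so these finitely many
rules bring every element into normal form. A normal form in the kernel of `φ` is moved into
`ι (K⟨Y⟩)` by the linear relations and is then killed by the relations of `B`.
-/

open Function

section

variable {K : Type*} [CommRing K]

section IdealSpan

variable {A A' : Type*} [NonUnitalRing A] [Module K A] [NonUnitalRing A'] [Module K A']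

theorem subset_idealSpan (s : Set A) : s ⊆ idealSpan K s :=
  fun _ hx => Submodule.mem_sInf.2 fun _ hJ => hJ.1 hx

theorem idealSpan_le {s : Set A} {J : Submodule K A}
    (hs : s ⊆ J) (hJ : ∀ a b : A, b ∈ J → a * b ∈ J ∧ b * a ∈ J) : idealSpan K s ≤ J :=
  sInf_le ⟨hs, hJ⟩

theorem mul_mem_idealSpan_left {s : Set A} (a : A) {b : A} (hb : b ∈ idealSpan K s) :
    a * b ∈ idealSpan K s :=
  Submodule.mem_sInf.2 fun J hJ => (hJ.2 a b (Submodule.mem_sInf.1 hb J hJ)).1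

theorem mul_mem_idealSpan_right {s : Set A} (a : A) {b : A} (hb : b ∈ idealSpan K s) :
    b * a ∈ idealSpan K s :=
  Submodule.mem_sInf.2 fun J hJ => (hJ.2 a b (Submodule.mem_sInf.1 hb J hJ)).2

theorem idealSpan_mono {s₁ s₂ : Set A} (h : s₁ ⊆ s₂) : idealSpan K s₁ ≤ idealSpan K s₂ :=
  idealSpan_le (h.trans (subset_idealSpan _))
    fun a _ hb => ⟨mul_mem_idealSpan_left a hb, mul_mem_idealSpan_right a hb⟩

theorem map_mem_idealSpan_image (φ : A →ₙₐ[K] A') {s : Set A} {x : A}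
    (hx : x ∈ idealSpan K s) : φ x ∈ idealSpan K (φ '' s) := by
  suffices idealSpan K s ≤ (idealSpan K (φ '' s)).comap (φ : A →ₗ[K] A') from this hx
  refine idealSpan_le (fun y hy => subset_idealSpan _ ⟨y, hy, rfl⟩) fun a b hb => ?_
  simp only [Submodule.mem_comap, LinearMap.coe_coe, map_mul] at hb ⊢
  exact ⟨mul_mem_idealSpan_left _ hb, mul_mem_idealSpan_right _ hb⟩

theorem map_eq_zero_of_mem_idealSpan (φ : A →ₙₐ[K] A') {s : Set A} (hs : ∀ x ∈ s, φ x = 0)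
    {x : A} (hx : x ∈ idealSpan K s) : φ x = 0 := by
  suffices idealSpan K s ≤ LinearMap.ker (φ : A →ₗ[K] A') from this hx
  refine idealSpan_le hs fun a b hb => ?_
  simp only [LinearMap.mem_ker, LinearMap.coe_coe, map_mul] at hb ⊢
  simp [hb]

end IdealSpan

namespace FreeNUAlg

variable {X Y : Type*}

variable (K) in
noncomputable def of (x : X) : FreeNUAlg K X := MonoidAlgebra.single (FreeSemigroup.of x) 1

theorem single_of_mul (x : X) (w : FreeSemigroup X) :
    (MonoidAlgebra.single (FreeSemigroup.of x * w) 1 : FreeNUAlg K X) =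
      of K x * MonoidAlgebra.single w 1 := by
  rw [of, MonoidAlgebra.single_mul_single, one_mul]

theorem submodule_eq_top {M : Submodule K (FreeNUAlg K X)} (hof : ∀ x, of K x ∈ M)
    (hmul : ∀ x, ∀ m ∈ M, of K x * m ∈ M) : M = ⊤ := by
  have hsingle (w : FreeSemigroup X) : MonoidAlgebra.single w 1 ∈ M := by
    induction w with
    | ih1 x => exact hof x
    | ih2 x w _ hw => rw [single_of_mul]; exact hmul x _ hw
  refine Submodule.eq_top_iff'.2 fun g => ?_
  induction g using MonoidAlgebra.induction with
  | zero => exact M.zero_mem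
  | single_add w r g _ _ hg =>
    refine M.add_mem ?_ hg
    simpa only [MonoidAlgebra.smul_single', mul_one] using M.smul_mem r (hsingle w)

variable {A : Type*} [NonUnitalSemiring A] [Module K A]

theorem hom_ext {φ ψ : FreeNUAlg K X →ₙₐ[K] A} (h : ∀ x, φ (of K x) = ψ (of K x)) : φ = ψ := by
  refine MonoidAlgebra.nonUnitalAlgHom_ext K fun w => ?_
  induction w with
  | ih1 x => exact h x
  | ih2 x w hx hw => rw [single_of_mul, map_mul, map_mul, h, hw]

variable [IsScalarTower K A A] [SMulCommClass K A A]

noncomputable def lift (g : X → A) : FreeNUAlg K X →ₙₐ[K] A :=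
  MonoidAlgebra.liftMagma K (FreeSemigroup.lift g)

@[simp]
theorem lift_of (g : X → A) (x : X) : lift g (of K x) = g x := by
  simp [lift, of, MonoidAlgebra.liftMagma_apply_apply, Finsupp.sum_single_index]

noncomputable def map (g : X → Y) : FreeNUAlg K X →ₙₐ[K] FreeNUAlg K Y := lift (of K ∘ g)

@[simp]
theorem map_of (g : X → Y) (x : X) : map g (of K x) = of K (g x) := lift_of _ x

theorem map_map {Z : Type*} (g : Y → Z) (h : X → Y) (c : FreeNUAlg K X) :
    map g (map h c) = map (g ∘ h) c :=
  DFunLike.congr_fun (hom_ext (φ := (map g).comp (map h)) fun x => by simp) c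

theorem map_id (c : FreeNUAlg K X) : map id c = c :=
  DFunLike.congr_fun (hom_ext (ψ := NonUnitalAlgHom.id K _) fun x => by simp) c

theorem map_eq_zero_iff_mem_idealSpan {A : Type*} [NonUnitalRing A] [Module K A]
    {φ : FreeNUAlg K X →ₙₐ[K] A} {N : Submodule K (FreeNUAlg K X)} {T : Set (FreeNUAlg K X)}
    (hT : ∀ r ∈ T, φ r = 0) (hof : ∀ x, of K x ∈ N ⊔ idealSpan K T)
    (hmul : ∀ x, ∀ m ∈ N, of K x * m ∈ N ⊔ idealSpan K T)
    (hN : ∀ m ∈ N, φ m = 0 → m ∈ idealSpan K T) (g : FreeNUAlg K X) :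
    φ g = 0 ↔ g ∈ idealSpan K T := by
  refine ⟨fun hg => ?_, map_eq_zero_of_mem_idealSpan φ hT⟩
  have hgen : N ⊔ idealSpan K T = ⊤ := by
    refine submodule_eq_top hof fun x m hm => ?_
    obtain ⟨n, hn, j, hj, rfl⟩ := Submodule.mem_sup.1 hm
    rw [mul_add]
    exact add_mem (hmul x n hn) (Submodule.mem_sup_right (mul_mem_idealSpan_left _ hj))
  obtain ⟨m, hm, j, hj, rfl⟩ := Submodule.mem_sup.1 (hgen ▸ Submodule.mem_top : g ∈ N ⊔ _)
  rw [map_add, map_eq_zero_of_mem_idealSpan φ hT hj, add_zero] at hg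
  exact add_mem (hN m hm hg) hj

end FreeNUAlg

variable {A : Type*} [NonUnitalRing A] [Module K A] [IsScalarTower K A A] [SMulCommClass K A A]

theorem NUAlgFP.of_surjective {X : Type*} [Finite X] (φ : FreeNUAlg K X →ₙₐ[K] A)
    (hφ : Surjective φ) {T : Set (FreeNUAlg K X)} (hT : T.Finite)
    (hker : ∀ g, φ g = 0 ↔ g ∈ idealSpan K T) : NUAlgFP K A := by
  obtain ⟨m, ⟨e⟩⟩ := Finite.exists_equiv_fin X
  have hinv (c : FreeNUAlg K X) : FreeNUAlg.map e.symm (FreeNUAlg.map e c) = c := by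
    rw [FreeNUAlg.map_map, e.symm_comp_self, FreeNUAlg.map_id]
  have hinv' (c : FreeNUAlg K (Fin m)) : FreeNUAlg.map e (FreeNUAlg.map e.symm c) = c := by
    rw [FreeNUAlg.map_map, e.self_comp_symm, FreeNUAlg.map_id]
  refine ⟨m, φ.comp (FreeNUAlg.map e.symm), hφ.comp fun c => ⟨_, hinv c⟩,
    (hT.image (FreeNUAlg.map e)).toFinset, fun c => ?_⟩
  rw [Set.Finite.coe_toFinset, NonUnitalAlgHom.comp_apply, hker]
  constructor
  · intro hc
    simpa only [hinv'] using
      map_mem_idealSpan_image (FreeNUAlg.map e) hc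
  · intro hc
    simpa only [Set.image_image, hinv, Set.image_id'] using
      map_mem_idealSpan_image (FreeNUAlg.map e.symm) hc

section Extension

open FreeNUAlg

variable {B : NonUnitalSubalgebra K A} {Y Z : Type*}

local notation "G" => FreeNUAlg K (Y ⊕ Z)
local notation "ι" => (map Sum.inl : FreeNUAlg K Y →ₙₐ[K] G)
local notation "γ" => Finsupp.linearCombination K (fun z : Z => (of K (Sum.inr z) : G))

variable (K Y Z) in
noncomputable def normalForms : Submodule K G :=
  LinearMap.range (ι : FreeNUAlg K Y →ₗ[K] G) ⊔ LinearMap.range γ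

variable (f : FreeNUAlg K Y →ₙₐ[K] B) (a : Z → A)

noncomputable def extensionHom : G →ₙₐ[K] A :=
  lift (Sum.elim (fun y => (f (of K y) : A)) a)

theorem extensionHom_inl (c : FreeNUAlg K Y) : extensionHom f a (ι c) = f c := by
  have : (extensionHom f a).comp ι = (NonUnitalSubalgebraClass.subtype B).comp f :=
    hom_ext fun y => by simp [extensionHom]
  exact DFunLike.congr_fun this c

theorem extensionHom_inr (l : Z →₀ K) :
    extensionHom f a (γ l) = Finsupp.linearCombination K a l := by
  have := Finsupp.apply_linearCombination K (extensionHom f a : G →ₗ[K] A)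
    (fun z : Z => (of K (Sum.inr z) : G)) l
  simp only [LinearMap.coe_coe] at this
  rw [this]
  congr 2
  ext z
  simp [extensionHom]

variable (σ : A → FreeNUAlg K (Y ⊕ Z)) (rs : Set (FreeNUAlg K Y)) (v : Set (Z →₀ K))

noncomputable def extensionRels : Set G :=
  ι '' rs ∪ (fun g => g - σ (extensionHom f a g)) ''
    (Set.range (fun p : (Y ⊕ Z) × (Y ⊕ Z) => of K p.1 * of K p.2) ∪ γ '' v)

variable {f a σ rs v}

theorem extensionHom_rels (hσ : ∀ x, extensionHom f a (σ x) = x)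
    (hrs : ∀ r ∈ rs, f r = 0) : ∀ r ∈ extensionRels f a σ rs v, extensionHom f a r = 0 := by
  rintro _ (⟨r, hr, rfl⟩ | ⟨g, -, rfl⟩)
  · rw [extensionHom_inl, hrs r hr, ZeroMemClass.coe_zero]
  · rw [map_sub, hσ, sub_self]

theorem of_mul_of_sub_mem_idealSpan (x y : Y ⊕ Z) :
    of K x * of K y - σ (extensionHom f a (of K x * of K y)) ∈
      idealSpan K (extensionRels f a σ rs v) :=
  subset_idealSpan _ (Or.inr ⟨_, Or.inl ⟨(x, y), rfl⟩, rfl⟩)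

theorem linearCombination_inr_sub_mem_idealSpan {w : Z →₀ K} (hw : w ∈ v) :
    γ w - σ (extensionHom f a (γ w)) ∈ idealSpan K (extensionRels f a σ rs v) :=
  subset_idealSpan _ (Or.inr ⟨_, Or.inr ⟨w, hw, rfl⟩, rfl⟩)

theorem range_inl_le_normalForms :
    LinearMap.range (ι : FreeNUAlg K Y →ₗ[K] G) ≤ normalForms K Y Z :=
  le_sup_left

theorem of_mem_normalForms (x : Y ⊕ Z) : of K x ∈ normalForms K Y Z := by
  rcases x with y | z
  · exact Submodule.mem_sup_left ⟨of K y, map_of _ y⟩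
  · exact Submodule.mem_sup_right ⟨Finsupp.single z 1, by simp⟩

theorem of_mul_inl_mem (hBl : ∀ a b : A, b ∈ B → a * b ∈ B)
    (hσB : ∀ b ∈ B, σ b ∈ Set.range ι) (x : Y ⊕ Z) (c : FreeNUAlg K Y) :
    of K x * ι c ∈
      LinearMap.range (ι : FreeNUAlg K Y →ₗ[K] G) ⊔ idealSpan K (extensionRels f a σ rs v) := by
  set J := idealSpan K (extensionRels f a σ rs v)
  have hpair (y : Y) : ∃ d, of K x * of K (Sum.inl y) - ι d ∈ J := by
    have hB : extensionHom f a (of K x * of K (Sum.inl y)) ∈ B := by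
      rw [← map_of Sum.inl y, map_mul, extensionHom_inl]
      exact hBl _ _ (f _).2
    obtain ⟨d, hd⟩ := hσB _ hB
    exact ⟨d, hd ▸ of_mul_of_sub_mem_idealSpan x (Sum.inl y)⟩
  suffices (LinearMap.range (ι : FreeNUAlg K Y →ₗ[K] G) ⊔ J).comap
      (LinearMap.mulLeft K (of K x) ∘ₗ (ι : FreeNUAlg K Y →ₗ[K] G)) = ⊤ by
    exact (Submodule.eq_top_iff'.1 this) c
  refine submodule_eq_top (fun y => ?_) fun y m _ => ?_
  all_goals
    obtain ⟨d, hd⟩ := hpair y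
    simp only [Submodule.mem_comap, LinearMap.comp_apply, LinearMap.mulLeft_apply,
      LinearMap.coe_coe, map_of]
  · rw [← add_sub_cancel (ι d) (of K x * of K (Sum.inl y))]
    exact add_mem (Submodule.mem_sup_left ⟨d, rfl⟩) (Submodule.mem_sup_right hd)
  · rw [map_mul, map_of, ← mul_assoc, ← add_sub_cancel (ι d) (of K x * of K (Sum.inl y)),
      add_mul, ← map_mul]
    exact add_mem (Submodule.mem_sup_left ⟨_, rfl⟩)
      (Submodule.mem_sup_right (mul_mem_idealSpan_right _ hd))

theorem of_mul_mem_normalForms_sup (hBl : ∀ a b : A, b ∈ B → a * b ∈ B)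
    (hσN : ∀ x, σ x ∈ normalForms K Y Z) (hσB : ∀ b ∈ B, σ b ∈ Set.range ι) (x : Y ⊕ Z) :
    ∀ m ∈ normalForms K Y Z,
      of K x * m ∈ normalForms K Y Z ⊔ idealSpan K (extensionRels f a σ rs v) := by
  suffices normalForms K Y Z ≤ (normalForms K Y Z ⊔ idealSpan K (extensionRels f a σ rs v)).comap
      (LinearMap.mulLeft K (of K x)) from fun m hm => this hm
  refine sup_le ?_ ?_
  · rintro _ ⟨c, rfl⟩
    have hle := sup_le_sup_right (range_inl_le_normalForms (K := K) (Y := Y) (Z := Z))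
      (idealSpan K (extensionRels f a σ rs v))
    exact hle (of_mul_inl_mem hBl hσB x c)
  · rw [Finsupp.range_linearCombination, Submodule.span_le]
    rintro _ ⟨z, rfl⟩
    rw [SetLike.mem_coe, Submodule.mem_comap, LinearMap.mulLeft_apply,
      ← add_sub_cancel (σ (extensionHom f a (of K x * of K (Sum.inr z)))) (of K x * _)]
    exact add_mem (Submodule.mem_sup_left (hσN _))
      (Submodule.mem_sup_right (of_mul_of_sub_mem_idealSpan x (Sum.inr z)))

theorem mem_idealSpan_of_mem_normalForms (hσ : ∀ x, extensionHom f a (σ x) = x)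
    (hσB : ∀ b ∈ B, σ b ∈ Set.range ι) (hker : ∀ c, f c = 0 ↔ c ∈ idealSpan K rs)
    (hv : ∀ l, Finsupp.linearCombination K a l ∈ B ↔ l ∈ Submodule.span K v)
    {m : G} (hm : m ∈ normalForms K Y Z) (hφm : extensionHom f a m = 0) :
    m ∈ idealSpan K (extensionRels f a σ rs v) := by
  set J := idealSpan K (extensionRels f a σ rs v)
  have hJ {j : G} (hj : j ∈ J) : extensionHom f a j = 0 :=
    map_eq_zero_of_mem_idealSpan _
      (extensionHom_rels hσ fun r hr => (hker r).2 (subset_idealSpan _ hr)) hj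
  obtain ⟨_, ⟨c, rfl⟩, _, ⟨l, rfl⟩, rfl⟩ := Submodule.mem_sup.1 hm
  have hl : Finsupp.linearCombination K a l ∈ B := by
    rw [map_add, LinearMap.coe_coe, extensionHom_inl, extensionHom_inr] at hφm
    rw [eq_neg_of_add_eq_zero_right hφm]
    exact neg_mem (f c).2
  have hγ : Submodule.span K v ≤ (LinearMap.range (ι : FreeNUAlg K Y →ₗ[K] G) ⊔ J).comap γ := by
    refine Submodule.span_le.2 fun w hw => ?_
    obtain ⟨d, hd⟩ := hσB (extensionHom f a (γ w))
      (by rw [extensionHom_inr]; exact (hv w).2 (Submodule.subset_span hw))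
    rw [SetLike.mem_coe, Submodule.mem_comap, ← add_sub_cancel (σ (extensionHom f a (γ w))) (γ w)]
    exact add_mem (Submodule.mem_sup_left ⟨d, hd⟩)
      (Submodule.mem_sup_right (linearCombination_inr_sub_mem_idealSpan hw))
  obtain ⟨_, ⟨d, rfl⟩, j, hj, hγl⟩ := Submodule.mem_sup.1 (hγ ((hv l).1 hl))
  simp only [LinearMap.coe_coe] at hγl hφm ⊢
  rw [← hγl, ← add_assoc, ← map_add] at hφm ⊢
  have hcd : f (c + d) = 0 := by
    rw [map_add, hJ hj, add_zero, extensionHom_inl] at hφm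
    exact_mod_cast hφm
  exact add_mem (idealSpan_mono Set.subset_union_left
    (map_mem_idealSpan_image _ ((hker _).1 hcd))) hj

theorem NUAlgFP.of_extension [Finite Y] [Finite Z] (hBl : ∀ a b : A, b ∈ B → a * b ∈ B)
    (hrs : rs.Finite) (hvfin : v.Finite) (hker : ∀ c, f c = 0 ↔ c ∈ idealSpan K rs)
    (hv : ∀ l, Finsupp.linearCombination K a l ∈ B ↔ l ∈ Submodule.span K v)
    (hσ : ∀ x, extensionHom f a (σ x) = x) (hσN : ∀ x, σ x ∈ normalForms K Y Z)
    (hσB : ∀ b ∈ B, σ b ∈ Set.range ι) : NUAlgFP K A :=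
  NUAlgFP.of_surjective (extensionHom f a) (fun x => ⟨σ x, hσ x⟩)
    ((hrs.image _).union (((Set.finite_range _).union (hvfin.image _)).image _))
    (map_eq_zero_iff_mem_idealSpan
      (extensionHom_rels hσ fun r hr => (hker r).2 (subset_idealSpan _ hr))
      (fun x => Submodule.mem_sup_left (of_mem_normalForms x))
      (of_mul_mem_normalForms_sup hBl hσN hσB)
      (fun _ hm => mem_idealSpan_of_mem_normalForms hσ hσB hker hv hm))

theorem exists_extensionHom_section (hf : Surjective f)
    (ha : ∀ x : A, ∃ l, x - Finsupp.linearCombination K a l ∈ B) :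
    ∃ σ : A → G, (∀ x, extensionHom f a (σ x) = x) ∧ (∀ x, σ x ∈ normalForms K Y Z) ∧
      ∀ b ∈ B, σ b ∈ Set.range ι := by
  classical
  choose l hl using ha
  refine ⟨fun x => if hx : x ∈ B then ι (surjInv hf ⟨x, hx⟩)
    else ι (surjInv hf ⟨_, hl x⟩) + γ (l x), fun x => ?_, fun x => ?_, fun b hb => ?_⟩ <;>
    dsimp only
  · split_ifs
    · rw [extensionHom_inl, surjInv_eq hf]
    · rw [map_add, extensionHom_inl, surjInv_eq hf, extensionHom_inr, sub_add_cancel]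
  · split_ifs
    · exact range_inl_le_normalForms ⟨_, rfl⟩
    · exact add_mem (range_inl_le_normalForms ⟨_, rfl⟩) (Submodule.mem_sup_right ⟨_, rfl⟩)
  · rw [dif_pos hb]
    exact ⟨_, rfl⟩

end Extension

universe u in
theorem Submodule.exists_lift_presentation {M : Type u} [AddCommGroup M] [Module K M]
    (B : Submodule K M) [Module.FinitePresentation K (M ⧸ B)] :
    ∃ (Z : Type u) (_ : Finite Z) (a : Z → M) (v : Finset (Z →₀ K)),
      (∀ x, ∃ l, x - Finsupp.linearCombination K a l ∈ B) ∧
        ∀ l, Finsupp.linearCombination K a l ∈ B ↔ l ∈ Submodule.span K (v : Set (Z →₀ K)) := by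
  obtain ⟨s, hs, v, hv⟩ := Module.FinitePresentation.out (R := K) (M := M ⧸ B)
  choose a ha using fun i : s => B.mkQ_surjective i
  have hmk (l : s →₀ K) : B.mkQ (Finsupp.linearCombination K a l) =
      Finsupp.linearCombination K ((↑) : s → M ⧸ B) l := by
    rw [Finsupp.apply_linearCombination]
    exact congrArg (Finsupp.linearCombination K · l) (funext ha)
  have hsurj : Surjective (Finsupp.linearCombination K ((↑) : s → M ⧸ B)) := by
    rw [← LinearMap.range_eq_top, Finsupp.range_linearCombination, Subtype.range_coe]
    exact hs
  refine ⟨s, inferInstance, a, v, fun x => ?_, fun l => ?_⟩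
  · obtain ⟨l, hl⟩ := hsurj (B.mkQ x)
    refine ⟨l, ?_⟩
    rw [← Submodule.Quotient.mk_eq_zero, Submodule.Quotient.mk_sub, ← B.mkQ_apply,
      ← B.mkQ_apply, hmk, hl, sub_self]
  · rw [hv, LinearMap.mem_ker, ← hmk, B.mkQ_apply, Submodule.Quotient.mk_eq_zero]

end

theorem fp_of_ideal_fp_of_quotient_module_fp_general
    (K A : Type*) [CommRing K]
    [NonUnitalRing A] [Module K A] [IsScalarTower K A A] [SMulCommClass K A A]
    (B : NonUnitalSubalgebra K A)
    (hBl : ∀ a b : A, b ∈ B → a * b ∈ B)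
    (hmod : Module.FinitePresentation K (A ⧸ B.toSubmodule))
    (hBfp : NUAlgFP K B) :
    NUAlgFP K A := by
  obtain ⟨n, f, hf, rs, hker⟩ := hBfp
  obtain ⟨Z, _, a, v, ha, hv⟩ := B.toSubmodule.exists_lift_presentation
  obtain ⟨σ, hσ, hσN, hσB⟩ := exists_extensionHom_section hf ha
  exact NUAlgFP.of_extension hBl rs.finite_toSet v.finite_toSet hker hv hσ hσN hσB

/-- Let `K` be a commutative ring, `A` a (not necessarily unital)
associative `K`-algebra and `B` a two-sided ideal of `A` (a `K`-subalgebra closed under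
left and right multiplication by arbitrary elements of `A`) such that the quotient `A/B`
is a finitely presented `K`-module. If `B` is finitely presented as a `K`-algebra, then
`A` is finitely presented as a `K`-algebra. -/
theorem fp_of_ideal_fp_of_quotient_module_fp
    (K A : Type*) [CommRing K]
    [NonUnitalRing A] [Module K A] [IsScalarTower K A A] [SMulCommClass K A A]
    (B : NonUnitalSubalgebra K A)
    (hBl : ∀ a b : A, b ∈ B → a * b ∈ B) (hBr : ∀ a b : A, b ∈ B → b * a ∈ B)
    (hmod : Module.FinitePresentation K (A ⧸ B.toSubmodule))
    (hBfp : NUAlgFP K B) :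
    NUAlgFP K A :=
  fp_of_ideal_fp_of_quotient_module_fp_general K A B hBl hmod hBfp
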